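/- Let ξ_1, ξ_2, … be i.i.d. real random variables, symmetric about 0, with P(|ξ_1| > t) = 1/(1 + t^γ) for all t ≥ 0, where γ > 1. Fix μ > 0 and set c₁ = 1/(2(1 + μ^{−γ})(1 + μ)^γ) and c₂ = inf_{x ≥ 1} (x/(1+x))^{x−1}. Then for every integer j ≥ max(1, ⌈μ^{−γ/(γ−1)}⌉): P(ξ_1 + ⋯ + ξ_j > jμ) ≥ c₁c₂ · j^{−γ}. -/

import Mathlib

open MeasureTheory ProbabilityTheory

set_option maxHeartbeats 1000000

/-- The constant `c₁ = 1/(2(1 + μ^{−γ})(1 + μ)^γ)`. -/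
noncomputable def cOne (γ μ : ℝ) : ℝ := 1 / (2 * (1 + μ ^ (-γ)) * (1 + μ) ^ γ)

/-- The constant `c₂ = inf_{x ≥ 1} (x/(1+x))^{x−1}`. -/
noncomputable def cTwo : ℝ := ⨅ x : {x : ℝ // 1 ≤ x}, ((x : ℝ) / (1 + (x : ℝ))) ^ ((x : ℝ) - 1)

/-- The threshold `k₀ = max(1, ⌈μ^{−γ/(γ−1)}⌉)`. -/
noncomputable def kZero (γ μ : ℝ) : ℤ := max 1 ⌈μ ^ (-γ / (γ - 1))⌉

/-- For i.i.d. symmetric errors with `P(|ξ| > t) = 1/(1 + t^γ)`, `γ > 1`, and `μ > 0`, we have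
`P(ξ_1 + ⋯ + ξ_j > jμ) ≥ c₁c₂ j^{−γ}` for every `j ≥ k₀`. -/
theorem stmt4 {Ω : Type*} [MeasurableSpace Ω] (P : Measure Ω) [IsProbabilityMeasure P]
    (ξ : ℕ → Ω → ℝ) (hmeas : ∀ i, Measurable (ξ i))
    (hindep : iIndepFun ξ P)
    (hident : ∀ i, P.map (ξ i) = P.map (ξ 0))
    (hsym : P.map (ξ 0) = P.map (fun ω => -ξ 0 ω))
    (γ : ℝ) (hγ : 1 < γ)
    (htail : ∀ t : ℝ, 0 ≤ t → P {ω | t < |ξ 0 ω|} = ENNReal.ofReal (1 / (1 + t ^ γ)))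
    (μ : ℝ) (hμ : 0 < μ)
    (j : ℕ) (hj : kZero γ μ ≤ (j : ℤ)) :
    ENNReal.ofReal (cOne γ μ * cTwo * (j : ℝ) ^ (-γ)) ≤
      P {ω | (j : ℝ) * μ < ∑ i ∈ Finset.range j, ξ i ω} := by
  have hγ0 : (0:ℝ) < γ := lt_trans one_pos hγ
  have hj1 : 1 ≤ j := by
    have h1 : (1:ℤ) ≤ (j:ℤ) := le_trans (le_max_left 1 _) hj
    exact_mod_cast h1
  have hjR1 : (1:ℝ) ≤ (j:ℝ) := by exact_mod_cast hj1
  have hjR0 : (0:ℝ) < (j:ℝ) := lt_of_lt_of_le one_pos hjR1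
  set a : ℝ := (j:ℝ) ^ (1/γ : ℝ) with ha
  have ha1 : (1:ℝ) ≤ a := Real.one_le_rpow hjR1 (by positivity)
  have ha0 : (0:ℝ) < a := lt_of_lt_of_le one_pos ha1
  have haγ : a ^ γ = (j:ℝ) := by
    rw [ha, ← Real.rpow_mul hjR0.le, one_div_mul_cancel hγ0.ne', Real.rpow_one]
  set T : ℝ := (j:ℝ) * μ + ((j:ℝ) - 1) * a with hTdef
  have hT0 : 0 ≤ T := by nlinarith
  have hTγ0 : (0:ℝ) ≤ T ^ γ := Real.rpow_nonneg hT0 γ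
  -- identical distribution
  have hmap : ∀ (k : ℕ) (s : Set ℝ), MeasurableSet s → P (ξ k ⁻¹' s) = P (ξ 0 ⁻¹' s) := by
    intro k s hs
    have h1 := congrArg (fun m : Measure ℝ => m s) (hident k)
    simpa [Measure.map_apply (hmeas k) hs, Measure.map_apply (hmeas 0) hs] using h1
  -- one-sided tail
  have htailIoi : ∀ t : ℝ, 0 ≤ t →
      P (ξ 0 ⁻¹' Set.Ioi t) = ENNReal.ofReal (1 / (2 * (1 + t ^ γ))) := by
    intro t ht
    have hsymt : P (ξ 0 ⁻¹' Set.Iio (-t)) = P (ξ 0 ⁻¹' Set.Ioi t) := by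
      have h1 := congrArg (fun m : Measure ℝ => m (Set.Iio (-t))) hsym
      rw [Measure.map_apply (hmeas 0) measurableSet_Iio,
          Measure.map_apply (f := fun ω => -ξ 0 ω) (hmeas 0).neg measurableSet_Iio] at h1
      have h2 : (fun ω => -ξ 0 ω) ⁻¹' Set.Iio (-t) = ξ 0 ⁻¹' Set.Ioi t := by
        ext ω; simp
      rw [h2] at h1
      exact h1
    have hsplit : {ω | t < |ξ 0 ω|} = ξ 0 ⁻¹' Set.Ioi t ∪ ξ 0 ⁻¹' Set.Iio (-t) := by
      ext ω
      simp only [Set.mem_setOf_eq, Set.mem_union, Set.mem_preimage, Set.mem_Ioi, Set.mem_Iio,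
        lt_abs, lt_neg]
    have hdisj : Disjoint (ξ 0 ⁻¹' Set.Ioi t) (ξ 0 ⁻¹' Set.Iio (-t)) := by
      rw [Set.disjoint_left]
      intro ω h1 h2
      simp only [Set.mem_preimage, Set.mem_Ioi, Set.mem_Iio] at h1 h2
      linarith
    have h3 : P (ξ 0 ⁻¹' Set.Ioi t) + P (ξ 0 ⁻¹' Set.Ioi t) = ENNReal.ofReal (1 / (1 + t ^ γ)) := by
      rw [← htail t ht, hsplit, measure_union hdisj ((hmeas 0) measurableSet_Iio), hsymt]
    have hx : P (ξ 0 ⁻¹' Set.Ioi t) = ENNReal.ofReal (1 / (1 + t ^ γ)) / 2 := by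
      rw [ENNReal.eq_div_iff two_ne_zero ENNReal.ofNat_ne_top, two_mul]
      exact h3
    rw [hx, show (1:ℝ)/(2*(1+t^γ)) = (1/(1+t^γ))/2 by rw [div_div, mul_comm],
      ENNReal.ofReal_div_of_pos two_pos, ENNReal.ofReal_ofNat]
  -- probability of the box
  have hIcc : P (ξ 0 ⁻¹' Set.Icc (-a) a) = ENNReal.ofReal ((j:ℝ) / (1 + (j:ℝ))) := by
    have hc : ξ 0 ⁻¹' Set.Icc (-a) a = {ω | a < |ξ 0 ω|}ᶜ := by
      ext ω
      simp [abs_le, not_lt]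
    have hms : MeasurableSet {ω | a < |ξ 0 ω|} :=
      measurableSet_lt measurable_const (hmeas 0).abs
    rw [hc, prob_compl_eq_one_sub hms, htail a ha0.le, haγ]
    rw [show (j:ℝ)/(1+(j:ℝ)) = 1 - 1/(1+(j:ℝ)) by field_simp; ring,
      ENNReal.ofReal_sub _ (by positivity), ENNReal.ofReal_one]
  -- the events
  set Sset : ℕ → ℕ → Set ℝ := fun i k => if k = i then Set.Ioi T else Set.Icc (-a) a with hSset
  set B : ℕ → Set Ω := fun i => ⋂ k ∈ Finset.range j, ξ k ⁻¹' Sset i k with hB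
  have hSmeas : ∀ i k, MeasurableSet (Sset i k) := by
    intro i k
    by_cases h : k = i <;> simp [hSset, h]
  have hBmeas : ∀ i, MeasurableSet (B i) := fun i =>
    Finset.measurableSet_biInter _ fun k _ => (hmeas k) (hSmeas i k)
  have hPB : ∀ i ∈ Finset.range j, P (B i) =
      ENNReal.ofReal (1/(2*(1+T^γ))) * ENNReal.ofReal ((j:ℝ)/(1+(j:ℝ))) ^ (j-1) := by
    intro i hi
    have h1 : P (B i) = ∏ k ∈ Finset.range j, P (ξ k ⁻¹' Sset i k) :=
      hindep.meas_biInter (fun k _ => ⟨Sset i k, hSmeas i k, rfl⟩)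
    have h2 : ∀ k, P (ξ k ⁻¹' Sset i k) =
        if k = i then ENNReal.ofReal (1/(2*(1+T^γ))) else ENNReal.ofReal ((j:ℝ)/(1+(j:ℝ))) := by
      intro k
      rw [hmap k _ (hSmeas i k)]
      by_cases h : k = i
      · simp only [hSset, h, if_pos rfl]
        exact htailIoi T hT0
      · simp only [hSset, if_neg h]
        exact hIcc
    rw [h1, Finset.prod_congr rfl fun k _ => h2 k, ← Finset.mul_prod_erase _ _ hi, if_pos rfl,
      Finset.prod_congr rfl (fun k hk => if_neg (Finset.ne_of_mem_erase hk)),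
      Finset.prod_const, Finset.card_erase_of_mem hi, Finset.card_range]
  -- disjointness
  have hdisjB : (↑(Finset.range j) : Set ℕ).PairwiseDisjoint B := by
    intro i hi i' hi' hne
    simp only [Finset.coe_range, Set.mem_Iio] at hi hi'
    rw [Function.onFun, Set.disjoint_left]
    intro ω hω hω'
    have h1 : ξ i' ω ∈ Sset i i' := Set.mem_iInter₂.mp hω i' (Finset.mem_range.mpr hi')
    have h2 : ξ i' ω ∈ Sset i' i' := Set.mem_iInter₂.mp hω' i' (Finset.mem_range.mpr hi')
    have h1' : ξ i' ω ∈ Set.Icc (-a) a := by simpa [hSset, Ne.symm hne] using h1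
    have h2' : T < ξ i' ω := by simpa [hSset] using h2
    have hj2 : 2 ≤ j := by omega
    have hj2R : (2:ℝ) ≤ (j:ℝ) := by exact_mod_cast hj2
    have hle : ξ i' ω ≤ a := h1'.2
    have hgt : T < ξ i' ω := h2'
    nlinarith
  -- inclusion
  have hsub : (⋃ i ∈ Finset.range j, B i) ⊆ {ω | (j:ℝ) * μ < ∑ i ∈ Finset.range j, ξ i ω} := by
    intro ω hω
    simp only [Set.mem_iUnion] at hω
    obtain ⟨i, hi, hωB⟩ := hω
    have hall : ∀ k ∈ Finset.range j, ξ k ω ∈ Sset i k := fun k hk => Set.mem_iInter₂.mp hωB k hk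
    have hii : T < ξ i ω := by
      have h := hall i hi
      simpa [hSset] using h
    have hother : ∀ k ∈ (Finset.range j).erase i, -a ≤ ξ k ω := by
      intro k hk
      have h := hall k (Finset.mem_of_mem_erase hk)
      have h' : ξ k ω ∈ Set.Icc (-a) a := by
        simpa [hSset, Finset.ne_of_mem_erase hk] using h
      exact h'.1
    have hsum : ((j:ℝ) - 1) * (-a) ≤ ∑ k ∈ (Finset.range j).erase i, ξ k ω := by
      have h := Finset.card_nsmul_le_sum ((Finset.range j).erase i) (fun k => ξ k ω) (-a) hother
      rwa [Finset.card_erase_of_mem hi, Finset.card_range, nsmul_eq_mul,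
        Nat.cast_sub hj1, Nat.cast_one] at h
    have hsplitS : ∑ k ∈ Finset.range j, ξ k ω = ξ i ω + ∑ k ∈ (Finset.range j).erase i, ξ k ω :=
      (Finset.add_sum_erase _ _ hi).symm
    simp only [Set.mem_setOf_eq]
    rw [hsplitS]
    have hrw : ((j:ℝ) - 1) * (-a) = -(((j:ℝ) - 1) * a) := by ring
    rw [hrw] at hsum
    linarith
  -- constants
  have hμγ : (0:ℝ) < μ ^ (-γ) := Real.rpow_pos_of_pos hμ _
  have h1μγ : (0:ℝ) < (1+μ) ^ γ := Real.rpow_pos_of_pos (by linarith) _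
  have hc1pos : 0 < cOne γ μ := by
    rw [cOne]; positivity
  have hterm_nonneg : ∀ x : {x:ℝ // 1 ≤ x}, 0 ≤ ((x:ℝ)/(1+(x:ℝ)))^((x:ℝ)-1) := by
    intro x
    have hx := x.2
    exact Real.rpow_nonneg (div_nonneg (by linarith) (by linarith)) _
  have hbdd : BddBelow (Set.range fun x : {x:ℝ // 1 ≤ x} => ((x:ℝ)/(1+(x:ℝ)))^((x:ℝ)-1)) := by
    refine ⟨0, ?_⟩
    rintro y ⟨x, rfl⟩
    exact hterm_nonneg x
  have hc2nonneg : 0 ≤ cTwo := le_ciInf hterm_nonneg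
  have hc2le : cTwo ≤ ((j:ℝ)/(1+(j:ℝ)))^(j-1) := by
    have h := ciInf_le hbdd (⟨(j:ℝ), hjR1⟩ : {x:ℝ // 1 ≤ x})
    rw [cTwo]
    rwa [show ((j:ℝ)-1) = ((j-1:ℕ):ℝ) by rw [Nat.cast_sub hj1, Nat.cast_one],
      Real.rpow_natCast] at h
  -- key bound on the tail threshold
  have hkey : 1 + T ^ γ ≤ (1 + μ ^ (-γ)) * (1 + μ) ^ γ * (j:ℝ) ^ (γ + 1) := by
    have h1 : (j:ℝ) ≤ (j:ℝ) ^ ((γ+1)/γ) := by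
      calc (j:ℝ) = (j:ℝ) ^ (1:ℝ) := (Real.rpow_one _).symm
      _ ≤ _ := Real.rpow_le_rpow_of_exponent_le hjR1 (by rw [le_div_iff₀ hγ0]; linarith)
    have h2 : (j:ℝ) * a = (j:ℝ) ^ ((γ+1)/γ) := by
      rw [ha, show (γ+1)/γ = 1 + 1/γ by field_simp, Real.rpow_add hjR0, Real.rpow_one]
    have hTle : T ≤ (1 + μ) * (j:ℝ) ^ ((γ+1)/γ) := by
      have h3 : ((j:ℝ)-1) * a ≤ (j:ℝ) * a := by nlinarith
      have h4 : (j:ℝ) * μ ≤ μ * ((j:ℝ) ^ ((γ+1)/γ)) :=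
        by nlinarith [mul_le_mul_of_nonneg_left h1 hμ.le]
      rw [hTdef]
      nlinarith [h2, h3, h4]
    have hTγ : T ^ γ ≤ (1+μ)^γ * (j:ℝ)^(γ+1) := by
      have h5 := Real.rpow_le_rpow hT0 hTle hγ0.le
      rwa [Real.mul_rpow (by linarith) (Real.rpow_nonneg hjR0.le _), ← Real.rpow_mul hjR0.le,
        div_mul_cancel₀ _ hγ0.ne'] at h5
    have hone : 1 ≤ μ ^ (-γ) * (1+μ)^γ * (j:ℝ)^(γ+1) := by
      have h6 : (1:ℝ) ≤ ((1+μ)/μ) ^ γ :=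
        Real.one_le_rpow (by rw [le_div_iff₀ hμ]; linarith) hγ0.le
      have h7 : ((1+μ)/μ)^γ = μ^(-γ) * (1+μ)^γ := by
        rw [Real.div_rpow (by linarith) hμ.le, Real.rpow_neg hμ.le, div_eq_mul_inv, mul_comm]
      rw [h7] at h6
      have h8 : (1:ℝ) ≤ (j:ℝ)^(γ+1) := Real.one_le_rpow hjR1 (by linarith)
      nlinarith [mul_le_mul h6 h8 zero_le_one (le_trans zero_le_one h6)]
    nlinarith [hTγ, hone]
  -- lower bound on the tail probability
  have hden : (0:ℝ) < 2*(1+T^γ) := by linarith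
  have hp : cOne γ μ * (j:ℝ) ^ (-(γ+1)) ≤ 1/(2*(1+T^γ)) := by
    rw [cOne, Real.rpow_neg hjR0.le]
    have hjp : (0:ℝ) < (j:ℝ)^(γ+1) := Real.rpow_pos_of_pos hjR0 _
    have heq : (1 / (2*(1+μ^(-γ))*(1+μ)^γ)) * ((j:ℝ)^(γ+1))⁻¹
        = 1 / (2*(1+μ^(-γ))*(1+μ)^γ * (j:ℝ)^(γ+1)) := by
      field_simp
    rw [heq]
    apply one_div_le_one_div_of_le hden
    nlinarith [hkey]
  -- final real inequality
  have hqnn : (0:ℝ) ≤ ((j:ℝ)/(1+(j:ℝ)))^(j-1) := by positivity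
  have hnp : (0:ℝ) ≤ (j:ℝ) * (1/(2*(1+T^γ))) :=
    mul_nonneg hjR0.le (le_of_lt (one_div_pos.mpr hden))
  have hfinal : cOne γ μ * cTwo * (j:ℝ)^(-γ)
      ≤ (j:ℝ) * ((1/(2*(1+T^γ))) * ((j:ℝ)/(1+(j:ℝ)))^(j-1)) := by
    have h1 : (j:ℝ) * (j:ℝ)^(-(γ+1)) = (j:ℝ)^(-γ) := by
      rw [show -γ = 1 + -(γ+1) by ring, Real.rpow_add hjR0, Real.rpow_one]
    calc cOne γ μ * cTwo * (j:ℝ)^(-γ)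
        = ((j:ℝ) * (cOne γ μ * (j:ℝ)^(-(γ+1)))) * cTwo := by rw [← h1]; ring
      _ ≤ ((j:ℝ) * (1/(2*(1+T^γ)))) * (((j:ℝ)/(1+(j:ℝ)))^(j-1)) :=
          mul_le_mul (mul_le_mul_of_nonneg_left hp hjR0.le) hc2le hc2nonneg hnp
      _ = _ := by ring
  -- assemble in ENNReal
  calc ENNReal.ofReal (cOne γ μ * cTwo * (j : ℝ) ^ (-γ))
      ≤ ENNReal.ofReal ((j:ℝ) * ((1/(2*(1+T^γ))) * ((j:ℝ)/(1+(j:ℝ)))^(j-1))) :=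
        ENNReal.ofReal_le_ofReal hfinal
    _ = ∑ i ∈ Finset.range j, P (B i) := by
        rw [Finset.sum_congr rfl hPB, Finset.sum_const, Finset.card_range, nsmul_eq_mul]
        rw [ENNReal.ofReal_mul hjR0.le, ENNReal.ofReal_mul (le_of_lt (one_div_pos.mpr hden)),
          ENNReal.ofReal_pow (by positivity), ENNReal.ofReal_natCast]
    _ = P (⋃ i ∈ Finset.range j, B i) :=
        (measure_biUnion_finset hdisjB (fun i _ => hBmeas i)).symm
    _ ≤ P {ω | (j : ℝ) * μ < ∑ i ∈ Finset.range j, ξ i ω} := measure_mono hsub
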